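/- Let Γ be a group generated by a finite symmetric set S = S⁻¹ ⊆ Γ, and let g : (0,∞) → (0,∞) be a strictly increasing differentiable function with tame superpolynomial growth (TSPG) such that γ_S(r−1) ≥ g(r) for every integer r ≥ 1. Then for every ε ∈ (0,1) there exists N ∈ ℕ such that for every finite subset D ⊆ Γ with |D| ≥ N and every real s > 0 with g(s) ≥ |D|, one has |∂_S D| / |D| ≥ (1−ε)/s (equivalently, |∂_S D|/|D| ≥ (1−ε)/g⁻¹(|D|)). -/

import Mathlib

open scoped Pointwise

variable {G : Type*} [Group G] [DecidableEq G]

/-- The ball of radius `r` in the word metric: elements of `G` expressible as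
a product of at most `r` elements of `S`. -/
def wordBall (S : Finset G) : ℕ → Finset G
  | 0 => {1}
  | r + 1 => wordBall S r ∪ S * wordBall S r

/-- The inner boundary of a finite set `D` with respect to the generating set `S`. -/
def innerBoundary (S D : Finset G) : Finset G :=
  D.filter fun x => ∃ s ∈ S, s * x ∉ D

/-!
For `y` in the ball `B_r`, writing `y` as a word of length at most `r` and telescoping gives
`|D \ y D| ≤ r |∂D|`, while double counting gives `∑_{y ∈ B_r} |D ∩ y D| ≤ |D|²`. Summing
`|D| = |D ∩ y D| + |D \ y D|` over `B_r` yields `|∂D| / |D| ≥ (1 - |D| / |B_r|) / r`.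
Take `r ≈ s / λ` with `λ < 1` close to `1`: then `|D| / |B_r| ≤ g(λ u) / g(u)` for `u = r + 1`,
and the two TSPG limits together force `g(λ u) / g(u) → 0`; with `λ = 1 - ε / 2` the bound is
eventually at least `(1 - ε) / s`.
-/

open Finset Filter Topology

lemma Finset.card_sdiff_mul_smul_le (D : Finset G) (a b : G) :
    #(D \ (a * b) • D) ≤ #(D \ a • D) + #(D \ b • D) := by
  calc #(D \ (a * b) • D) ≤ #(D \ a • D ∪ a • D \ (a * b) • D) :=
        card_le_card (sdiff_triangle D (a • D) _)
    _ ≤ #(D \ a • D) + #(a • (D \ b • D)) := by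
        rw [smul_finset_sdiff, smul_smul]; exact card_union_le _ _
    _ = #(D \ a • D) + #(D \ b • D) := by rw [card_smul_finset]

lemma sdiff_smul_subset_innerBoundary {S : Finset G} (D : Finset G) {s : G} (hs : s⁻¹ ∈ S) :
    D \ s • D ⊆ innerBoundary S D := by
  intro x hx
  rw [Finset.mem_sdiff, mem_smul_finset] at hx
  exact mem_filter.2 ⟨hx.1, s⁻¹, hs, fun h => hx.2 ⟨s⁻¹ * x, h, by simp⟩⟩

lemma card_sdiff_smul_le_of_mem_wordBall {S : Finset G} (hsymm : ∀ s ∈ S, s⁻¹ ∈ S)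
    (D : Finset G) {r : ℕ} {y : G} (hy : y ∈ wordBall S r) :
    #(D \ y • D) ≤ r * #(innerBoundary S D) := by
  induction r generalizing y with
  | zero => simp_all [wordBall]
  | succ r ih =>
    rcases mem_union.1 hy with hy | hy
    · exact (ih hy).trans (Nat.mul_le_mul_right _ r.le_succ)
    · obtain ⟨s, hs, z, hz, rfl⟩ := mem_mul.1 hy
      calc #(D \ (s * z) • D) ≤ #(D \ s • D) + #(D \ z • D) := card_sdiff_mul_smul_le D s z
        _ ≤ #(innerBoundary S D) + r * #(innerBoundary S D) :=
          add_le_add (card_le_card (sdiff_smul_subset_innerBoundary D (hsymm s hs))) (ih hz)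
        _ = (r + 1) * #(innerBoundary S D) := by ring

lemma Finset.sum_card_inter_smul_le (B D : Finset G) : ∑ y ∈ B, #(D ∩ y • D) ≤ #D * #D := by
  calc ∑ y ∈ B, #(D ∩ y • D) = #{ab ∈ D ×ˢ D⁻¹ | ab.1 * ab.2 ∈ B} := by
        simp only [card_inter_smul, ← card_mul_eq, sum_card_fiberwise_eq_card_filter]
    _ ≤ #D * #D := by
        grw [card_filter_le, card_product, card_inv]

lemma card_wordBall_mul_card_le (S : Finset G) (hsymm : ∀ s ∈ S, s⁻¹ ∈ S) (D : Finset G) (r : ℕ) :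
    #(wordBall S r) * #D ≤ #D * #D + #(wordBall S r) * (r * #(innerBoundary S D)) := by
  calc #(wordBall S r) * #D = ∑ y ∈ wordBall S r, (#(D ∩ y • D) + #(D \ y • D)) := by
        simp [card_inter_add_card_sdiff]
    _ ≤ #D * #D + #(wordBall S r) * (r * #(innerBoundary S D)) := by
        rw [sum_add_distrib]
        gcongr
        · exact sum_card_inter_smul_le _ _
        · exact (sum_le_sum fun y hy => card_sdiff_smul_le_of_mem_wordBall hsymm D hy).trans
            (by simp)

lemma one_mem_wordBall (S : Finset G) (r : ℕ) : 1 ∈ wordBall S r := by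
  induction r with
  | zero => exact mem_singleton_self 1
  | succ r ih => exact mem_union_left _ ih

lemma one_sub_card_div_card_wordBall_div_le (S : Finset G) (hsymm : ∀ s ∈ S, s⁻¹ ∈ S)
    {D : Finset G} (hD : D.Nonempty) (r : ℕ) :
    (1 - (#D : ℝ) / #(wordBall S r)) / r ≤ (#(innerBoundary S D) : ℝ) / #D := by
  have hB : (0 : ℝ) < #(wordBall S r) := by exact_mod_cast card_pos.2 ⟨1, one_mem_wordBall S r⟩
  have hD' : (0 : ℝ) < #D := by exact_mod_cast hD.card_pos
  have hcount : (#(wordBall S r) : ℝ) * #D ≤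
      #D * #D + #(wordBall S r) * (r * #(innerBoundary S D)) := by
    exact_mod_cast card_wordBall_mul_card_le S hsymm D r
  refine div_le_of_le_mul₀ r.cast_nonneg (by positivity) ?_
  rw [div_mul_eq_mul_div, le_div_iff₀ hD', one_sub_div hB.ne', div_mul_eq_mul_div, div_le_iff₀ hB]
  linarith

lemma tendsto_ratio_of_tame {g g' : ℝ → ℝ} {lam : ℝ}
    (htop : Tendsto (fun r => r * g' r / g r) atTop atTop)
    (hzero : Tendsto (fun r => r * g' r * g (lam * r) / g r ^ 2) atTop (𝓝 0)) :
    Tendsto (fun r => g (lam * r) / g r) atTop (𝓝 0) := by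
  refine (hzero.div_atTop htop).congr' ?_
  filter_upwards [htop.eventually_ne_atTop 0] with r hr
  obtain ⟨hrg', hg⟩ := div_ne_zero_iff.1 hr
  field_simp
  exact mul_div_cancel_left₀ _ hrg'

lemma eventually_apply_div_apply_ceil_lt {g : ℝ → ℝ} (hgpos : ∀ r, 0 < r → 0 < g r)
    (hmono : StrictMonoOn g (Set.Ioi 0)) {lam : ℝ} (hlam : 0 < lam)
    (hratio : Tendsto (fun r => g (lam * r) / g r) atTop (𝓝 0)) {δ : ℝ} (hδ : 0 < δ) :
    ∀ᶠ s in atTop, g s / g (⌈s / lam⌉₊ + 1) < δ := by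
  have hceil : Tendsto (fun s : ℝ => (⌈s / lam⌉₊ : ℝ) + 1) atTop atTop :=
    tendsto_atTop_add_const_right _ _ <| tendsto_natCast_atTop_atTop.comp <|
      tendsto_nat_ceil_atTop.comp <| tendsto_id.atTop_div_const hlam
  filter_upwards [hceil.eventually (hratio.eventually (gt_mem_nhds hδ)),
    eventually_gt_atTop 0] with s hs hs0
  set u : ℝ := ⌈s / lam⌉₊ + 1
  have hsu : s ≤ lam * u := by
    rw [← div_le_iff₀' hlam]
    exact (Nat.le_ceil _).trans (le_add_of_nonneg_right zero_le_one)
  have hu : 0 < u := by positivity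
  calc g s / g u ≤ g (lam * u) / g u := by
        gcongr
        · exact (hgpos u hu).le
        · exact hmono.monotoneOn hs0 (hs0.trans_le hsu) hsu
    _ < δ := hs

lemma eventually_div_le_div_ceil {a b lam : ℝ} (ha : 0 ≤ a) (hlam : 0 < lam)
    (hab : a < lam * b) : ∀ᶠ s in atTop, a / s ≤ b / ⌈s / lam⌉₊ := by
  have hslope : 0 < b - a / lam := by
    rw [sub_pos, div_lt_iff₀' hlam]; exact hab
  filter_upwards [eventually_gt_atTop 0, eventually_ge_atTop (a / (b - a / lam))]
    with s hs hsa
  have hr : (0 : ℝ) < ⌈s / lam⌉₊ := Nat.cast_pos.2 (Nat.ceil_pos.2 (by positivity))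
  rw [div_le_div_iff₀ hs hr]
  calc a * ⌈s / lam⌉₊ ≤ a * (s / lam + 1) := by
        gcongr; exact (Nat.ceil_lt_add_one (by positivity)).le
    _ ≤ b * s := by
        rw [div_le_iff₀ hslope] at hsa
        linarith [mul_div_assoc a s lam, mul_div_right_comm a s lam]

lemma eventually_exists_radius {g : ℝ → ℝ} (hgpos : ∀ r, 0 < r → 0 < g r)
    (hmono : StrictMonoOn g (Set.Ioi 0))
    (hratio : ∀ lam, 0 < lam → lam < 1 → Tendsto (fun r => g (lam * r) / g r) atTop (𝓝 0))
    {ε : ℝ} (hε0 : 0 < ε) (hε1 : ε < 1) :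
    ∀ᶠ s in atTop, ∃ r : ℕ, (1 - ε) / s ≤ (1 - g s / g (r + 1)) / r := by
  -- `1 - ε < (1 - ε / 2) ^ 2`, so `λ = 1 - ε / 2` leaves room for an error `ε / 2` in the ratio.
  have hlam : 0 < 1 - ε / 2 := by linarith
  filter_upwards [eventually_apply_div_apply_ceil_lt hgpos hmono hlam
      (hratio _ hlam (by linarith)) (half_pos hε0),
    eventually_div_le_div_ceil (a := 1 - ε) (b := 1 - ε / 2) (by linarith) hlam (by nlinarith)]
    with s hs hs'
  exact ⟨⌈s / (1 - ε / 2)⌉₊, hs'.trans (by gcongr)⟩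

theorem stmt12_general (S : Finset G)
    (hsymm : ∀ s ∈ S, s⁻¹ ∈ S)
    (g g' : ℝ → ℝ) (hgpos : ∀ r : ℝ, 0 < r → 0 < g r)
    (hmono : StrictMonoOn g (Set.Ioi 0))
    (htame_top : Filter.Tendsto (fun r => r * g' r / g r) Filter.atTop Filter.atTop)
    (htame_zero : ∀ lam : ℝ, 0 < lam → lam < 1 →
      Filter.Tendsto (fun r => r * g' r * g (lam * r) / (g r) ^ 2)
        Filter.atTop (nhds 0))
    (hgrowth : ∀ r : ℕ, 1 ≤ r → g r ≤ ((wordBall S (r - 1)).card : ℝ))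
    (ε : ℝ) (hε0 : 0 < ε) (hε1 : ε < 1) :
    ∃ N : ℕ, ∀ D : Finset G, N ≤ D.card →
      ∀ s : ℝ, 0 < s → (D.card : ℝ) ≤ g s →
        (1 - ε) / s ≤ ((innerBoundary S D).card : ℝ) / (D.card : ℝ) := by
  obtain ⟨s₀, hs₀⟩ := eventually_atTop.1 <| (eventually_gt_atTop 0).and <|
    eventually_exists_radius hgpos hmono
      (fun lam h0 h1 => tendsto_ratio_of_tame htame_top (htame_zero lam h0 h1)) hε0 hε1
  have hs₀pos : 0 < s₀ := (hs₀ s₀ le_rfl).1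
  refine ⟨⌈g s₀⌉₊ + 1, fun D hD s hs hDs => ?_⟩
  have hs₀s : s₀ < s := (hmono.lt_iff_lt hs₀pos hs).1 ((Nat.lt_of_ceil_lt hD).trans_le hDs)
  obtain ⟨r, hr⟩ := (hs₀ s hs₀s.le).2
  calc (1 - ε) / s ≤ (1 - g s / g (r + 1)) / r := hr
    _ ≤ (1 - (#D : ℝ) / #(wordBall S r)) / r := by
        gcongr
        · exact (hgpos s hs).le
        · exact hgpos _ (by positivity)
        · simpa using hgrowth (r + 1) (by omega)
    _ ≤ (#(innerBoundary S D) : ℝ) / #D :=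
        one_sub_card_div_card_wordBall_div_le S hsymm (card_pos.1 (by omega)) r

theorem stmt12 (S : Finset G)
    (hsymm : ∀ s ∈ S, s⁻¹ ∈ S) (hgen : Subgroup.closure (S : Set G) = ⊤)
    (g g' : ℝ → ℝ) (hgpos : ∀ r : ℝ, 0 < r → 0 < g r)
    (hmono : StrictMonoOn g (Set.Ioi 0))
    (hderiv : ∀ r : ℝ, 0 < r → HasDerivAt g (g' r) r)
    (hg'pos : ∀ r : ℝ, 0 < r → 0 < g' r)
    (htame_top : Filter.Tendsto (fun r => r * g' r / g r) Filter.atTop Filter.atTop)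
    (htame_zero : ∀ lam : ℝ, 0 < lam → lam < 1 →
      Filter.Tendsto (fun r => r * g' r * g (lam * r) / (g r) ^ 2)
        Filter.atTop (nhds 0))
    (hgrowth : ∀ r : ℕ, 1 ≤ r → g r ≤ ((wordBall S (r - 1)).card : ℝ))
    (ε : ℝ) (hε0 : 0 < ε) (hε1 : ε < 1) :
    ∃ N : ℕ, ∀ D : Finset G, N ≤ D.card →
      ∀ s : ℝ, 0 < s → (D.card : ℝ) ≤ g s →
        (1 - ε) / s ≤ ((innerBoundary S D).card : ℝ) / (D.card : ℝ) :=
  stmt12_general S hsymm g g' hgpos hmono htame_top htame_zero hgrowth ε hε0 hε1
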